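/- If s ∈ ℝ is not an eigenvalue of Λ (i.e., s ≠ λ_i for all i), then for every T ∈ 𝒯_Λ the matrix T − sI is invertible and F_s(T) ∈ 𝒯_Λ, and the map T ↦ F_s(T) is a bijection from 𝒯_Λ onto 𝒯_Λ. -/

import Mathlib

open Matrix Filter Topology

attribute [local instance] Matrix.normedAddCommGroup Matrix.normedSpace

noncomputable section

attribute [local instance] Classical.propDecidable

/-- The first `n+1` columns of the `(n+2)×(n+2)` matrix `M` are linearly independent,
i.e. `M` is *almost invertible*. -/
def AlmostInv {n : ℕ} (M : Matrix (Fin (n+2)) (Fin (n+2)) ℝ) : Prop :=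
  LinearIndependent ℝ (fun j : Fin (n+1) => fun i => M i j.castSucc)

/-- `M = Q⋆ R⋆` with `Q⋆` orthogonal of determinant one and `R⋆` upper triangular
with positive diagonal except possibly at the last entry. -/
def IsQsRs {n : ℕ} (M Q R : Matrix (Fin (n+2)) (Fin (n+2)) ℝ) : Prop :=
  Qᵀ * Q = 1 ∧ Q.det = 1 ∧ (∀ i j : Fin (n+2), j < i → R i j = 0) ∧
    (∀ i : Fin (n+1), 0 < R i.castSucc i.castSucc) ∧ M = Q * R

/-- `M = Q R` with `Q` orthogonal and `R` upper triangular with positive diagonal. -/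
def IsQR {n : ℕ} (M Q R : Matrix (Fin (n+2)) (Fin (n+2)) ℝ) : Prop :=
  Qᵀ * Q = 1 ∧ (∀ i j : Fin (n+2), j < i → R i j = 0) ∧
    (∀ i : Fin (n+2), 0 < R i i) ∧ M = Q * R

/-- `E_n = diag(1, …, 1, -1)`. -/
def En (n : ℕ) : Matrix (Fin (n+2)) (Fin (n+2)) ℝ :=
  Matrix.diagonal (fun i => if i = Fin.last (n+1) then -1 else 1)

/-- The signed shifted QR step `F_s(T) = Q⋆ᵀ T Q⋆` where `T - s I = Q⋆ R⋆`. -/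
def Fs {n : ℕ} (s : ℝ) (T : Matrix (Fin (n+2)) (Fin (n+2)) ℝ) :
    Matrix (Fin (n+2)) (Fin (n+2)) ℝ :=
  if h : ∃ Q R, IsQsRs (T - s • 1) Q R then (h.choose)ᵀ * T * h.choose else 0

/-- The (plain) shifted QR step `Φ(T, s) = Qᵀ T Q` where `T - s I = Q R`. -/
def Phi {n : ℕ} (T : Matrix (Fin (n+2)) (Fin (n+2)) ℝ) (s : ℝ) :
    Matrix (Fin (n+2)) (Fin (n+2)) ℝ :=
  if h : ∃ Q R, IsQR (T - s • 1) Q R then (h.choose)ᵀ * T * h.choose else 0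

/-- `T` is symmetric and tridiagonal. -/
def SymTridiag {n : ℕ} (T : Matrix (Fin (n+2)) (Fin (n+2)) ℝ) : Prop :=
  Tᵀ = T ∧ ∀ i j : Fin (n+2), (i.val + 1 < j.val ∨ j.val + 1 < i.val) → T i j = 0

/-- `b(T)`, the lowest subdiagonal entry `T_{n, n-1}` (1-based). -/
def lowb {n : ℕ} (T : Matrix (Fin (n+2)) (Fin (n+2)) ℝ) : ℝ :=
  T (Fin.last (n+1)) ⟨n, by omega⟩

/-- `T` is unreduced: all subdiagonal entries are nonzero. -/
def Unreduced {n : ℕ} (T : Matrix (Fin (n+2)) (Fin (n+2)) ℝ) : Prop :=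
  ∀ i : Fin (n+1), T i.succ i.castSucc ≠ 0

/-- `𝒯_Λ`: real symmetric tridiagonal matrices with the same characteristic polynomial
as `Λ = diagonal lam`. -/
def TSet {n : ℕ} (lam : Fin (n+2) → ℝ) : Set (Matrix (Fin (n+2)) (Fin (n+2)) ℝ) :=
  {T | SymTridiag T ∧ T.charpoly = (Matrix.diagonal lam).charpoly}

/-- The deflation neighborhood `D^i_{Λ,ε}`. -/
def Dset {n : ℕ} (lam : Fin (n+2) → ℝ) (ε : ℝ) (i : Fin (n+2)) :
    Set (Matrix (Fin (n+2)) (Fin (n+2)) ℝ) :=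
  {T ∈ TSet lam | |lowb T| ≤ ε ∧
    |T (Fin.last (n+1)) (Fin.last (n+1)) - lam i| ≤ Real.sqrt 2 * ε}

/-- The deflation set `D^i_{Λ,0}`. -/
def D0 {n : ℕ} (lam : Fin (n+2) → ℝ) (i : Fin (n+2)) :
    Set (Matrix (Fin (n+2)) (Fin (n+2)) ℝ) :=
  {T ∈ TSet lam | lowb T = 0 ∧ T (Fin.last (n+1)) (Fin.last (n+1)) = lam i}

/-- The deflation domain `D^i_Λ`: matrices `T ∈ 𝒯_Λ` with `T - λ_i I` almost invertible. -/
def DD {n : ℕ} (lam : Fin (n+2) → ℝ) (i : Fin (n+2)) :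
    Set (Matrix (Fin (n+2)) (Fin (n+2)) ℝ) :=
  {T ∈ TSet lam | AlmostInv (T - lam i • 1)}

/-- A simple shift strategy. -/
def SimpleShift {n : ℕ} (lam : Fin (n+2) → ℝ)
    (σ : Matrix (Fin (n+2)) (Fin (n+2)) ℝ → ℝ) : Prop :=
  (∀ T ∈ TSet lam, σ (En n * T * En n) = σ T) ∧
  ∃ C > 0, ∀ T ∈ TSet lam, ∃ i : Fin (n+2), |σ T - lam i| ≤ C * |lowb T|

/-- The vector space of real symmetric tridiagonal matrices. -/
def STSpace (n : ℕ) : Submodule ℝ (Matrix (Fin (n+2)) (Fin (n+2)) ℝ) where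
  carrier := {T | SymTridiag T}
  add_mem' := by
    rintro a b ⟨ha1, ha2⟩ ⟨hb1, hb2⟩
    refine ⟨by rw [Matrix.transpose_add, ha1, hb1], fun i j h => ?_⟩
    simp [Matrix.add_apply, ha2 i j h, hb2 i j h]
  zero_mem' := ⟨Matrix.transpose_zero, fun i j _ => rfl⟩
  smul_mem' := by
    rintro c a ⟨ha1, ha2⟩
    refine ⟨by rw [Matrix.transpose_smul, ha1], fun i j h => ?_⟩
    simp [Matrix.smul_apply, ha2 i j h]

/-- `σ` is smooth near `A ⊆ 𝒯_Λ`: there are an open subset `U` of the vector space of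
symmetric tridiagonal matrices containing `A` and a `C^∞` function on `U` agreeing with
`σ` on `U ∩ 𝒯_Λ`. -/
def SmoothNear {n : ℕ} (lam : Fin (n+2) → ℝ)
    (σ : Matrix (Fin (n+2)) (Fin (n+2)) ℝ → ℝ)
    (A : Set (Matrix (Fin (n+2)) (Fin (n+2)) ℝ)) : Prop :=
  ∃ (U : Set (STSpace n)) (σt : STSpace n → ℝ),
    IsOpen U ∧
    (∀ T : STSpace n, (T : Matrix (Fin (n+2)) (Fin (n+2)) ℝ) ∈ A → T ∈ U) ∧
    ContDiffOn ℝ (⊤ : ℕ∞) σt U ∧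
    ∀ T : STSpace n, T ∈ U → (T : Matrix (Fin (n+2)) (Fin (n+2)) ℝ) ∈ TSet lam →
      σt T = σ (T : Matrix (Fin (n+2)) (Fin (n+2)) ℝ)

/-- The Frobenius norm `‖A‖ = √(trace(Aᵀ A))`. -/
def frobNorm {n : ℕ} (A : Matrix (Fin (n+2)) (Fin (n+2)) ℝ) : ℝ :=
  Real.sqrt (Matrix.trace (Aᵀ * A))

end

/-! Since `s` is not a root of the common characteristic polynomial `∏ (X - λᵢ)`, every `T - sI`
with `T ∈ 𝒯_Λ` is invertible. If `T - sI = QR`, then `F_s(T) - sI = Qᵀ(T - sI)Q = RQ`; as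
`Q = (T - sI)R⁻¹` is upper Hessenberg, so is `RQ`, and `F_s(T)` is a symmetric Hessenberg (hence
tridiagonal) matrix orthogonally similar to `T`. The step is inverted by running it backwards:
factor `T' - sI = RQ` (from the Q⋆R⋆ factorization of `(T' - sI)⁻¹ = Qᵀ R⁻¹`) and take
`T = Q T' Qᵀ`; uniqueness of that factorization makes `F_s` injective. -/

open Matrix InnerProductSpace Finset
open scoped RealInnerProductSpace

section MatrixAlgebra

variable {ι K : Type*} [Fintype ι] [DecidableEq ι] [CommRing K] {P Q T : Matrix ι ι K}

theorem det_eq_one_or_neg_one_of_transpose_mul_self [NoZeroDivisors K] (hQ : Qᵀ * Q = 1) :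
    Q.det = 1 ∨ Q.det = -1 :=
  mul_self_eq_one_iff.1 <| by simpa using congrArg det hQ

theorem mul_mul_sub_smul_one (h : P * Q = 1) (s : K) :
    P * T * Q - s • 1 = P * (T - s • 1) * Q := by
  rw [mul_sub, sub_mul, Matrix.mul_smul, mul_one, Matrix.smul_mul, h]

theorem mul_mul_mul_mul_eq_self_of_mul_eq_one (h : Q * P = 1) : Q * (P * T * Q) * P = T := by
  simp only [← mul_assoc, h, one_mul]
  rw [mul_assoc, h, mul_one]

theorem charpoly_mul_mul_of_mul_eq_one (h : Q * P = 1) : (P * T * Q).charpoly = T.charpoly := by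
  rw [charpoly_mul_comm, ← mul_assoc, h, one_mul]

end MatrixAlgebra

theorem isUnit_det_sub_smul_one_of_charpoly_eq {ι K : Type*} [Fintype ι] [DecidableEq ι] [Field K]
    {T : Matrix ι ι K} {lam : ι → K} {s : K} (hs : ∀ i, s ≠ lam i)
    (hT : T.charpoly = (diagonal lam).charpoly) :
    IsUnit (T - s • 1).det := by
  have h : (s • (1 : Matrix ι ι K) - T).det = ∏ i, (s - lam i) := by
    rw [smul_one_eq_diagonal, ← scalar_apply, ← eval_charpoly, hT, charpoly_diagonal,
      Polynomial.eval_prod]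
    simp
  rw [← neg_sub, det_neg, h]
  exact isUnit_iff_ne_zero.2 <|
    mul_ne_zero (by simp) (prod_ne_zero_iff.2 fun i _ => sub_ne_zero.2 (hs i))

section Triangular

variable {m R : Type*} [Fintype m] [LinearOrder m]

theorem Matrix.IsUpperTriangular.mul_apply_self [NonUnitalNonAssocSemiring R]
    {M N : Matrix m m R} (hM : M.IsUpperTriangular) (hN : N.IsUpperTriangular) (i : m) :
    (M * N) i i = M i i * N i i := by
  rw [mul_apply, sum_eq_single i (fun k _ hk => ?_) (by simp)]
  rcases hk.lt_or_gt with h | h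
  · rw [hM h, zero_mul]
  · rw [hN h, mul_zero]

variable [DecidableEq m]

theorem Matrix.IsUpperTriangular.inv [CommRing R] {M : Matrix m m R} (hM : M.IsUpperTriangular) :
    M⁻¹.IsUpperTriangular := by
  by_cases h : IsUnit M.det
  · let := invertibleOfIsUnitDet M h
    exact blockTriangular_inv_of_blockTriangular hM
  · rw [nonsing_inv_apply_not_isUnit _ h]
    exact blockTriangular_zero

theorem Matrix.IsUpperTriangular.inv_apply_self [Field R] {M : Matrix m m R}
    (hM : M.IsUpperTriangular) (hdet : IsUnit M.det) (i : m) : M⁻¹ i i = (M i i)⁻¹ :=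
  eq_inv_of_mul_eq_one_right <| by
    rw [← hM.mul_apply_self hM.inv, mul_nonsing_inv _ hdet, one_apply_eq]

theorem Matrix.IsUpperTriangular.eq_diagonal_of_transpose_mul_self [CommRing R]
    {D : Matrix m m R} (hD : D.IsUpperTriangular) (ho : Dᵀ * D = 1) : D = diagonal D.diag := by
  have hDt : Dᵀ.IsUpperTriangular := inv_eq_left_inv ho ▸ hD.inv
  ext i j
  rcases lt_trichotomy i j with h | rfl | h
  · rw [diagonal_apply_ne _ h.ne, ← transpose_apply D j i, hDt h]
  · rw [diagonal_apply_eq, diag_apply]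
  · rw [diagonal_apply_ne _ h.ne', hD h]

end Triangular

theorem real_inner_gramSchmidt_self {E ι : Type*} [NormedAddCommGroup E] [InnerProductSpace ℝ E]
    [LinearOrder ι] [LocallyFiniteOrderBot ι] [WellFoundedLT ι] (f : ι → E) (i : ι) :
    ⟪gramSchmidt ℝ f i, f i⟫ = ‖gramSchmidt ℝ f i‖ ^ 2 := by
  conv_lhs => rw [gramSchmidt_def'' ℝ f i]
  rw [inner_add_right, inner_sum, real_inner_self_eq_norm_sq, add_eq_left]
  exact sum_eq_zero fun j hj => by
    rw [real_inner_smul_right, gramSchmidt_orthogonal ℝ f (mem_Iio.1 hj).ne', mul_zero]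

theorem Matrix.exists_qr {ι : Type*} [Fintype ι] [DecidableEq ι] [LinearOrder ι]
    [LocallyFiniteOrderBot ι] (A : Matrix ι ι ℝ) (hA : IsUnit A.det) :
    ∃ Q R : Matrix ι ι ℝ, Qᵀ * Q = 1 ∧ R.IsUpperTriangular ∧ (∀ i, 0 < R i i) ∧ A = Q * R := by
  let f : ι → EuclideanSpace ℝ ι := fun k => WithLp.toLp 2 (A.col k)
  have hf : LinearIndependent ℝ f :=
    (linearIndependent_cols_iff_isUnit.2 ((isUnit_iff_isUnit_det A).2 hA)).map'
      (WithLp.linearEquiv 2 ℝ (ι → ℝ)).symm.toLinearMap (LinearEquiv.ker _)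
  have hcard : Module.finrank ℝ (EuclideanSpace ℝ ι) = Fintype.card ι := finrank_euclideanSpace
  let g := gramSchmidtOrthonormalBasis hcard f
  let e := EuclideanSpace.basisFun ι ℝ
  refine ⟨e.toBasis.toMatrix g, g.toBasis.toMatrix f, ?_,
    gramSchmidtOrthonormalBasis_inv_isUpperTriangular hcard f, fun i => ?_, ?_⟩
  · simpa [star_eq_conjTranspose] using
      mem_unitaryGroup_iff'.1 (e.toMatrix_orthonormalBasis_mem_unitary g)
  · have hne : gramSchmidt ℝ f i ≠ 0 := gramSchmidt_ne_zero i hf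
    have hgi : g i = gramSchmidtNormed ℝ f i :=
      gramSchmidtOrthonormalBasis_apply hcard (by simp [gramSchmidtNormed, hne])
    have hnorm : 0 < ‖gramSchmidt ℝ f i‖ := norm_pos_iff.2 hne
    simp only [Module.Basis.toMatrix_apply, OrthonormalBasis.coe_toBasis_repr_apply,
      OrthonormalBasis.repr_apply_apply, hgi, gramSchmidtNormed, real_inner_smul_left,
      real_inner_gramSchmidt_self, RCLike.ofReal_real_eq_id, id]
    positivity
  · rw [← g.coe_toBasis, Module.Basis.toMatrix_mul_toMatrix]
    ext i k
    simp [Module.Basis.toMatrix_apply, e, f]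

section Hessenberg

variable {m : ℕ} {R : Type*}

def IsUpperHessenberg [Zero R] (A : Matrix (Fin m) (Fin m) R) : Prop :=
  ∀ ⦃i j : Fin m⦄, (j : ℕ) + 1 < i → A i j = 0

variable {A U : Matrix (Fin m) (Fin m) R}

theorem IsUpperHessenberg.mul_isUpperTriangular [NonUnitalNonAssocSemiring R]
    (hA : IsUpperHessenberg A) (hU : U.IsUpperTriangular) : IsUpperHessenberg (A * U) := by
  intro i j hij
  refine (mul_apply ..).trans (sum_eq_zero fun k _ => ?_)
  by_cases hk : (k : ℕ) + 1 < i
  · rw [hA hk, zero_mul]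
  · rw [hU (show j < k by rw [Fin.lt_def]; omega), mul_zero]

theorem Matrix.IsUpperTriangular.mul_isUpperHessenberg [NonUnitalNonAssocSemiring R]
    (hU : U.IsUpperTriangular) (hA : IsUpperHessenberg A) : IsUpperHessenberg (U * A) := by
  intro i j hij
  refine (mul_apply ..).trans (sum_eq_zero fun k _ => ?_)
  by_cases hk : k < i
  · rw [hU hk, zero_mul]
  · rw [hA (show (j : ℕ) + 1 < k by rw [not_lt, Fin.le_def] at hk; omega), mul_zero]

theorem isUpperHessenberg_sub_smul_one_iff [Ring R] {s : R} :
    IsUpperHessenberg (A - s • 1) ↔ IsUpperHessenberg A := by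
  refine forall₂_congr fun i j => imp_congr_right fun hij => ?_
  have hne : i ≠ j := by rintro rfl; omega
  simp [one_apply_ne hne]

variable [CommRing R]

theorem IsUpperHessenberg.mul_swap_right (h : IsUpperHessenberg (A * U))
    (hU : U.IsUpperTriangular) (hdet : IsUnit U.det) : IsUpperHessenberg (U * A) := by
  have hA : IsUpperHessenberg A := by
    simpa only [mul_nonsing_inv_cancel_right _ _ hdet] using h.mul_isUpperTriangular hU.inv
  exact hU.mul_isUpperHessenberg hA

theorem IsUpperHessenberg.mul_swap_left (h : IsUpperHessenberg (U * A))
    (hU : U.IsUpperTriangular) (hdet : IsUnit U.det) : IsUpperHessenberg (A * U) := by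
  have hA : IsUpperHessenberg A := by
    simpa only [nonsing_inv_mul_cancel_left _ _ hdet] using hU.inv.mul_isUpperHessenberg h
  exact hA.mul_isUpperTriangular hU

end Hessenberg

section SignedQR

variable {n : ℕ} {M M' Q Q' R R' : Matrix (Fin (n+2)) (Fin (n+2)) ℝ}

theorem En_mul_self : En n * En n = 1 := by
  rw [En, diagonal_mul_diagonal, ← diagonal_one]
  congr 1
  funext i
  split_ifs <;> norm_num

theorem det_En : (En n).det = -1 := by
  simp [En, det_diagonal]

theorem En_mul_apply_castSucc (R : Matrix (Fin (n+2)) (Fin (n+2)) ℝ) (i : Fin (n+1)) :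
    (En n * R) i.castSucc i.castSucc = R i.castSucc i.castSucc := by
  simp [En, diagonal_mul, (Fin.castSucc_lt_last i).ne]

theorem exists_isQsRs (hM : IsUnit M.det) : ∃ Q R, IsQsRs M Q R := by
  obtain ⟨Q, R, ho, hu, hp, rfl⟩ := exists_qr M hM
  rcases det_eq_one_or_neg_one_of_transpose_mul_self ho with hd | hd
  · exact ⟨Q, R, ho, hd, fun i j h => hu h, fun i => hp _, rfl⟩
  refine ⟨Q * En n, En n * R, ?_, ?_, fun i j h => ?_, fun i => ?_, ?_⟩
  · rw [transpose_mul, En, diagonal_transpose, ← En, mul_assoc, ← mul_assoc Qᵀ, ho, one_mul,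
      En_mul_self]
  · rw [det_mul, hd, det_En]; norm_num
  · exact ((blockTriangular_diagonal _).mul hu) h
  · rw [En_mul_apply_castSucc]; exact hp _
  · rw [mul_assoc, ← mul_assoc (En n), En_mul_self, one_mul]

theorem IsQsRs.isUpperTriangular (h : IsQsRs M Q R) : R.IsUpperTriangular :=
  fun i j hij => h.2.2.1 i j hij

theorem IsQsRs.det_eq (h : IsQsRs M Q R) : M.det = R.det := by
  rw [h.2.2.2.2, det_mul, h.2.1, one_mul]

theorem eq_one_of_isUpperTriangular_of_transpose_mul_self {D : Matrix (Fin (n+2)) (Fin (n+2)) ℝ}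
    (hu : D.IsUpperTriangular) (ho : Dᵀ * D = 1) (hdet : D.det = 1)
    (hpos : ∀ i : Fin (n+1), 0 < D i.castSucc i.castSucc) : D = 1 := by
  have hdiag := hu.eq_diagonal_of_transpose_mul_self ho
  have hsq : ∀ i, D i i * D i i = 1 := fun i => by
    rw [hdiag, diagonal_transpose, diagonal_mul_diagonal, ← diagonal_one] at ho
    simpa using congrFun (diagonal_injective ho) i
  have hcs : ∀ i : Fin (n+1), D i.castSucc i.castSucc = 1 := fun i =>
    (mul_self_eq_one_iff.1 (hsq _)).resolve_right (by linarith [hpos i])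
  have hlast : D (Fin.last (n+1)) (Fin.last (n+1)) = 1 := by
    rw [hdiag, det_diagonal, Fin.prod_univ_castSucc] at hdet
    simpa [hcs] using hdet
  rw [hdiag, ← diagonal_one]
  exact congrArg diagonal (funext fun i => Fin.lastCases hlast hcs i)

theorem IsQsRs.unique (hM : IsUnit M.det)
    (h : IsQsRs M Q R) (h' : IsQsRs M Q' R') : Q = Q' ∧ R = R' := by
  have hR : IsUnit R.det := h.det_eq ▸ hM
  have hu := h.isUpperTriangular
  have hu' := h'.isUpperTriangular
  obtain ⟨ho, hd, -, hp, rfl⟩ := h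
  obtain ⟨ho', hd', -, hp', he⟩ := h'
  set D := Q'ᵀ * Q
  have hDR : D * R = R' := by rw [mul_assoc, he, ← mul_assoc, ho', one_mul]
  have hD : D = R' * R⁻¹ := by rw [← hDR, mul_nonsing_inv_cancel_right _ _ hR]
  have hDu : D.IsUpperTriangular := hD ▸ hu'.mul hu.inv
  have hDo : Dᵀ * D = 1 := by
    rw [transpose_mul, transpose_transpose, mul_assoc, ← mul_assoc Q', mul_eq_one_comm.1 ho',
      one_mul, ho]
  have hDdet : D.det = 1 := by simp [D, hd, hd']
  have hDpos : ∀ i : Fin (n+1), 0 < D i.castSucc i.castSucc := fun i => by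
    rw [hD, hu'.mul_apply_self hu.inv, hu.inv_apply_self hR]
    exact mul_pos (hp' i) (inv_pos.2 (hp i))
  have hD1 : D = 1 := eq_one_of_isUpperTriangular_of_transpose_mul_self hDu hDo hDdet hDpos
  refine ⟨?_, by rwa [hD1, one_mul] at hDR⟩
  calc Q = Q' * D := by rw [← mul_assoc, mul_eq_one_comm.1 ho', one_mul]
    _ = Q' := by rw [hD1, mul_one]

theorem IsQsRs.transpose_inv (h : IsQsRs M Q R) (hR : IsUnit R.det) :
    IsQsRs (Qᵀ * R⁻¹) Qᵀ R⁻¹ :=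
  ⟨by rw [transpose_transpose, mul_eq_one_comm.1 h.1], by rw [det_transpose, h.2.1],
    fun _ _ hij => h.isUpperTriangular.inv hij,
    fun i => by rw [h.isUpperTriangular.inv_apply_self hR]; exact inv_pos.2 (h.2.2.2.1 i), rfl⟩

-- An RQ factorization of `M` is read off from the Q⋆R⋆ factorization of `M⁻¹`.
theorem exists_rq (hM : IsUnit M.det) : ∃ Q R, IsQsRs (Q * R) Q R ∧ M = R * Q := by
  have hM' := isUnit_nonsing_inv_det M hM
  obtain ⟨P, U, h⟩ := exists_isQsRs hM'
  refine ⟨Pᵀ, U⁻¹, h.transpose_inv (h.det_eq ▸ hM'), ?_⟩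
  calc M = M⁻¹⁻¹ := (nonsing_inv_nonsing_inv M hM).symm
    _ = U⁻¹ * Pᵀ := by rw [h.2.2.2.2, Matrix.mul_inv_rev, inv_eq_left_inv h.1]

theorem IsQsRs.eq_of_mul_eq_mul (h : IsQsRs M Q R) (h' : IsQsRs M' Q' R') (hR : IsUnit R.det)
    (heq : R * Q = R' * Q') : Q = Q' := by
  have hR' : IsUnit R'.det := by
    have hdet : R.det = R'.det := by simpa [h.2.1, h'.2.1] using congrArg det heq
    exact hdet ▸ hR
  have hinv : Qᵀ * R⁻¹ = Q'ᵀ * R'⁻¹ := by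
    rw [← inv_eq_left_inv h.1, ← inv_eq_left_inv h'.1, ← Matrix.mul_inv_rev,
      ← Matrix.mul_inv_rev, heq]
  have hN : IsUnit (Qᵀ * R⁻¹).det := (h.transpose_inv hR).det_eq ▸ isUnit_nonsing_inv_det R hR
  exact transpose_inj.1
    ((h.transpose_inv hR).unique hN (hinv ▸ h'.transpose_inv hR')).1

end SignedQR

section ShiftedQRStep

variable {n : ℕ} {lam : Fin (n+2) → ℝ} {s : ℝ} {T Q R : Matrix (Fin (n+2)) (Fin (n+2)) ℝ}

theorem symTridiag_iff : SymTridiag T ↔ Tᵀ = T ∧ IsUpperHessenberg T := by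
  refine ⟨fun h => ⟨h.1, fun i j hij => h.2 i j (Or.inr hij)⟩, fun ⟨hsym, hH⟩ => ⟨hsym, ?_⟩⟩
  rintro i j (hij | hij)
  · rw [← hsym, transpose_apply, hH hij]
  · exact hH hij

theorem transpose_mul_mul_mem_TSet (hT : T ∈ TSet lam) (hQ : Q * Qᵀ = 1)
    (hH : IsUpperHessenberg (Qᵀ * T * Q)) : Qᵀ * T * Q ∈ TSet lam := by
  have hsym : (Qᵀ * T * Q)ᵀ = Qᵀ * T * Q := by
    rw [transpose_mul, transpose_mul, transpose_transpose, hT.1.1, mul_assoc]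
  exact ⟨symTridiag_iff.2 ⟨hsym, hH⟩, (charpoly_mul_mul_of_mul_eq_one hQ).trans hT.2⟩

theorem Fs_eq_of_isQsRs (hM : IsUnit (T - s • 1).det) (h : IsQsRs (T - s • 1) Q R) :
    Fs s T = Qᵀ * T * Q := by
  have hex : ∃ Q R, IsQsRs (T - s • 1) Q R := ⟨Q, R, h⟩
  rw [Fs, dif_pos hex, (hex.choose_spec.choose_spec.unique hM h).1]

theorem IsQsRs.transpose_mul_mul_sub_smul_one (h : IsQsRs (T - s • 1) Q R) :
    Qᵀ * T * Q - s • 1 = R * Q := by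
  rw [mul_mul_sub_smul_one h.1, h.2.2.2.2, ← mul_assoc, h.1, one_mul]

theorem Fs_mem_TSet (hT : T ∈ TSet lam) (hM : IsUnit (T - s • 1).det) : Fs s T ∈ TSet lam := by
  obtain ⟨Q, R, h⟩ := exists_isQsRs hM
  have hQR : IsUpperHessenberg (Q * R) :=
    h.2.2.2.2 ▸ isUpperHessenberg_sub_smul_one_iff.2 (symTridiag_iff.1 hT.1).2
  rw [Fs_eq_of_isQsRs hM h]
  refine transpose_mul_mul_mem_TSet hT (mul_eq_one_comm.1 h.1) ?_
  rw [← isUpperHessenberg_sub_smul_one_iff (s := s), h.transpose_mul_mul_sub_smul_one]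
  exact hQR.mul_swap_right h.isUpperTriangular (h.det_eq ▸ hM)

theorem Fs_injOn (s : ℝ) :
    Set.InjOn (Fs s) {T : Matrix (Fin (n+2)) (Fin (n+2)) ℝ | IsUnit (T - s • 1).det} := by
  intro T hT T' hT' heq
  obtain ⟨Q, R, h⟩ := exists_isQsRs hT
  obtain ⟨Q', R', h'⟩ := exists_isQsRs hT'
  rw [Fs_eq_of_isQsRs hT h, Fs_eq_of_isQsRs hT' h'] at heq
  obtain rfl : Q = Q' := h.eq_of_mul_eq_mul h' (h.det_eq ▸ hT) <| by
    rw [← h.transpose_mul_mul_sub_smul_one, ← h'.transpose_mul_mul_sub_smul_one, heq]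
  have hQ : Q * Qᵀ = 1 := mul_eq_one_comm.1 h.1
  rw [← mul_mul_mul_mul_eq_self_of_mul_eq_one hQ (T := T), heq,
    mul_mul_mul_mul_eq_self_of_mul_eq_one hQ]

theorem Fs_surjOn (hdet : ∀ T ∈ TSet lam, IsUnit (T - s • 1).det) :
    Set.SurjOn (Fs s) (TSet lam) (TSet lam) := by
  intro T' hT'
  obtain ⟨Q, R, h, hRQ⟩ := exists_rq (hdet T' hT')
  have hR : IsUnit R.det := by simpa [hRQ, det_mul, h.2.1] using hdet T' hT'
  have hQ : Q * Qᵀ = 1 := mul_eq_one_comm.1 h.1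
  have hsub : Q * T' * Qᵀ - s • 1 = Q * R := by
    rw [mul_mul_sub_smul_one hQ, hRQ, mul_assoc, mul_assoc, hQ, mul_one]
  have hH : IsUpperHessenberg (Q * T' * Qᵀ) := by
    rw [← isUpperHessenberg_sub_smul_one_iff (s := s), hsub]
    refine IsUpperHessenberg.mul_swap_left ?_ h.isUpperTriangular hR
    exact hRQ ▸ isUpperHessenberg_sub_smul_one_iff.2 (symTridiag_iff.1 hT'.1).2
  refine ⟨Q * T' * Qᵀ, ?_, ?_⟩
  · simpa using transpose_mul_mul_mem_TSet (Q := Qᵀ) hT' (by simpa using h.1) (by simpa using hH)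
  · rw [Fs_eq_of_isQsRs (by rw [hsub, h.det_eq]; exact hR) (hsub ▸ h),
      mul_mul_mul_mul_eq_self_of_mul_eq_one h.1]

end ShiftedQRStep

theorem stmt6_general (n : ℕ) (lam : Fin (n+2) → ℝ)
    (s : ℝ) (hs : ∀ i : Fin (n+2), s ≠ lam i) :
    (∀ T ∈ TSet lam,
      IsUnit (T - s • (1 : Matrix (Fin (n+2)) (Fin (n+2)) ℝ)).det ∧ Fs s T ∈ TSet lam) ∧
    Set.BijOn (Fs s) (TSet lam) (TSet lam) := by
  have hdet : ∀ T ∈ TSet lam, IsUnit (T - s • (1 : Matrix (Fin (n+2)) (Fin (n+2)) ℝ)).det :=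
    fun T hT => isUnit_det_sub_smul_one_of_charpoly_eq hs hT.2
  have hmaps : Set.MapsTo (Fs s) (TSet lam) (TSet lam) := fun T hT => Fs_mem_TSet hT (hdet T hT)
  exact ⟨fun T hT => ⟨hdet T hT, hmaps hT⟩, hmaps, (Fs_injOn s).mono hdet, Fs_surjOn hdet⟩

theorem stmt6 (n : ℕ) (lam : Fin (n+2) → ℝ) (hlam : StrictMono lam)
    (s : ℝ) (hs : ∀ i : Fin (n+2), s ≠ lam i) :
    (∀ T ∈ TSet lam,
      IsUnit (T - s • (1 : Matrix (Fin (n+2)) (Fin (n+2)) ℝ)).det ∧ Fs s T ∈ TSet lam) ∧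
    Set.BijOn (Fs s) (TSet lam) (TSet lam) :=
  stmt6_general n lam s hs
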